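/- Let k ≥ 1 and let σ be a convex drawing of the complete tripartite graph K_{k,k,k} with partition classes V₁, V₂, V₃ in which the images σ(V₁), σ(V₂), σ(V₃) occupy three pairwise disjoint cyclic intervals of ZMod (3k). Then every 4-cycle of K_{k,k,k} contains exactly one pair of independent edges that cross in σ. -/

import Mathlib

/-- Two edges (as unordered pairs of vertices) share no endpoint, i.e. they are independent. -/
def Sym2Indep {V : Type*} (e f : Sym2 V) : Prop := ∀ x : V, x ∈ e → x ∉ f

/-- `M(G)`: the number of unordered pairs of edges of `G` that share no endpoint. -/
noncomputable def indepPairs {V : Type*} (G : SimpleGraph V) : ℕ :=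
  {p : Sym2 (Sym2 V) | ∃ e f : Sym2 V,
    p = s(e, f) ∧ e ∈ G.edgeSet ∧ f ∈ G.edgeSet ∧ Sym2Indep e f}.ncard

/-- `z` lies on the open cyclic arc from `x` to `y` in `ZMod n`. -/
def InArc {n : ℕ} (x y z : ZMod n) : Prop :=
  0 < (z - x).val ∧ (z - x).val < (y - x).val

/-- The independent edges `e` and `f` cross in the convex drawing `σ`:
their endpoints alternate in the cyclic order. -/
def ConvexCross {V : Type*} {n : ℕ} (σ : V → ZMod n) (e f : Sym2 V) : Prop :=
  Sym2Indep e f ∧ ∃ a b c d : V, e = s(a, b) ∧ f = s(c, d) ∧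
    Xor' (InArc (σ a) (σ b) (σ c)) (InArc (σ a) (σ b) (σ d))

/-- `cr(σ)`: the number of unordered pairs of edges of `G` that cross in the
convex drawing `σ`. -/
noncomputable def convexCr {V : Type*} {n : ℕ} (G : SimpleGraph V) (σ : V → ZMod n) : ℕ :=
  {p : Sym2 (Sym2 V) | ∃ e f : Sym2 V,
    p = s(e, f) ∧ e ∈ G.edgeSet ∧ f ∈ G.edgeSet ∧ ConvexCross σ e f}.ncard

/-- A set of positions in `ZMod n` is a cyclic interval, i.e. a set of consecutive
positions `{a, a+1, …, a+k}`. -/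
def IsCyclicInterval {n : ℕ} (S : Set (ZMod n)) : Prop :=
  ∃ (a : ZMod n) (k : ℕ), S = {z : ZMod n | ∃ j : ℕ, j ≤ k ∧ z = a + (j : ZMod n)}

/-- The complete tripartite graph `K_{k,k,k}`: vertices are pairs `(i, x)` with `i : Fin 3`
the index of the partition class, and two vertices are adjacent iff they lie in distinct
classes. -/
def completeTripartite (k : ℕ) : SimpleGraph (Fin 3 × Fin k) :=
  SimpleGraph.fromRel (fun a b => a.1 ≠ b.1)

/-!
Of the three ways to pair four distinct points of a circle into two chords, exactly one gives
crossing chords. Since `K_{k,k,k}` has only three classes, two opposite vertices of a 4-cycle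
lie in a common class. The chord joining them stays inside the interval of that class, so it
does not separate the other two vertices, which lie outside it. Hence exactly one of the two
remaining pairings, the two pairs of independent edges of the cycle, is crossing.
-/

namespace ZMod

variable {n : ℕ} [NeZero n]

lemma sbtw_iff_val_lt {a b c : ZMod n} :
    sbtw a b c ↔ a.val < b.val ∧ b.val < c.val ∨ b.val < c.val ∧ c.val < a.val ∨
      c.val < a.val ∧ a.val < b.val := by
  obtain ⟨m, rfl⟩ := Nat.exists_eq_add_one_of_ne_zero (NeZero.ne n)
  exact Fin.sbtw_iff

lemma val_sub_add_val_eq_or (a b : ZMod n) :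
    (a - b).val + b.val = a.val ∨ (a - b).val + b.val = a.val + n := by
  rcases lt_or_ge ((a - b).val + b.val) n with h | h
  · left; rw [← val_add_of_lt h, sub_add_cancel]
  · right; rw [val_add_val_of_le h, sub_add_cancel]

end ZMod

section InArc

variable {n : ℕ} [NeZero n]

lemma inArc_iff_sbtw {x y z : ZMod n} : InArc x y z ↔ sbtw x z y := by
  rw [InArc, ZMod.sbtw_iff_val_lt]
  have := (z - x).val_lt; have := (y - x).val_lt
  have := x.val_lt; have := y.val_lt; have := z.val_lt
  rcases ZMod.val_sub_add_val_eq_or z x with hz | hz <;>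
    rcases ZMod.val_sub_add_val_eq_or y x with hy | hy <;> omega

lemma ZMod.sbtw_sub_right {a b c : ZMod n} (t : ZMod n) :
    sbtw (a - t) (b - t) (c - t) ↔ sbtw a b c := by
  simp only [← inArc_iff_sbtw, InArc, sub_sub_sub_cancel_right]

end InArc

def ChordsCross {α : Type*} [SBtw α] (a b c d : α) : Prop :=
  Xor (sbtw a c b) (sbtw a d b)

lemma chordsCross_comm_right {α : Type*} [SBtw α] {a b c d : α} :
    ChordsCross a b d c ↔ ChordsCross a b c d := by
  rw [ChordsCross, ChordsCross, xor_comm]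

section CircularOrder

variable {α : Type*} [CircularOrder α] {a b c d : α}

lemma sbtw_swap_iff_not (hab : a ≠ b) (hca : c ≠ a) (hcb : c ≠ b) :
    sbtw b c a ↔ ¬ sbtw a c b := by
  rw [sbtw_iff_not_btw, not_iff_not, sbtw_iff_btw_not_btw, iff_self_and]
  intro habc hbca
  rcases habc.antisymm hbca with h | h | h
  exacts [hca h.symm, hcb h, hab h.symm]

lemma chordsCross_comm_left (hca : c ≠ a) (hcb : c ≠ b) (hda : d ≠ a) (hdb : d ≠ b) :
    ChordsCross b a c d ↔ ChordsCross a b c d := by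
  rcases eq_or_ne a b with rfl | hab
  · rfl
  rw [ChordsCross, sbtw_swap_iff_not hab hca hcb, sbtw_swap_iff_not hab hda hdb, xor_not_not,
    ChordsCross]

end CircularOrder

namespace ZMod

variable {n : ℕ} [NeZero n] {a b c d : ZMod n}

lemma chordsCross_comm (hac : a ≠ c) (had : a ≠ d) (hbc : b ≠ c) (hbd : b ≠ d) :
    ChordsCross c d a b ↔ ChordsCross a b c d := by
  have := (val_injective n).ne hac; have := (val_injective n).ne had
  have := (val_injective n).ne hbc; have := (val_injective n).ne hbd
  simp only [ChordsCross, sbtw_iff_val_lt, xor_def]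
  omega

lemma chordsCross_sub_right (t : ZMod n) :
    ChordsCross (a - t) (b - t) (c - t) (d - t) ↔ ChordsCross a b c d := by
  simp only [ChordsCross, sbtw_sub_right]

lemma xor_chordsCross_iff_not_chordsCross (hab : a ≠ b) (hac : a ≠ c) (had : a ≠ d)
    (hbc : b ≠ c) (hbd : b ≠ d) (hcd : c ≠ d) :
    Xor (ChordsCross a b c d) (ChordsCross b c d a) ↔ ¬ ChordsCross a c b d := by
  -- Rotating `a` to `0` leaves `omega` a small enough case analysis.
  suffices key : ∀ b c d : ZMod n, b ≠ 0 → c ≠ 0 → d ≠ 0 → b ≠ c → b ≠ d → c ≠ d →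
      (Xor (ChordsCross 0 b c d) (ChordsCross b c d 0) ↔ ¬ ChordsCross 0 c b d) by
    have := key (b - a) (c - a) (d - a) (sub_ne_zero.2 hab.symm) (sub_ne_zero.2 hac.symm)
      (sub_ne_zero.2 had.symm) (sub_left_injective.ne hbc) (sub_left_injective.ne hbd)
      (sub_left_injective.ne hcd)
    rwa [← sub_self a, chordsCross_sub_right, chordsCross_sub_right, chordsCross_sub_right] at this
  intro b c d hb hc hd hbc hbd hcd
  have := (val_injective n).ne hbc; have := (val_injective n).ne hbd
  have := (val_injective n).ne hcd
  have hb₀ := val_pos.2 hb; have hc₀ := val_pos.2 hc; have hd₀ := val_pos.2 hd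
  simp only [ChordsCross, sbtw_iff_val_lt, val_zero, xor_def, Nat.not_lt_zero, and_false,
    false_and, or_false, false_or, hb₀, hc₀, hd₀, true_and]
  omega

end ZMod

section CyclicInterval

variable {n : ℕ} [NeZero n] {S : Set (ZMod n)}

lemma IsCyclicInterval.exists_forall_mem_iff_val_sub_le (hS : IsCyclicInterval S) :
    ∃ (t : ZMod n) (K : ℕ), ∀ w, w ∈ S ↔ (w - t).val ≤ K := by
  obtain ⟨t, K, rfl⟩ := hS
  refine ⟨t, K, fun w => ⟨?_, fun h => ⟨_, h, by rw [ZMod.natCast_zmod_val]; ring⟩⟩⟩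
  rintro ⟨j, hj, rfl⟩
  rw [add_sub_cancel_left, ZMod.val_natCast]
  exact (Nat.mod_le j n).trans hj

lemma IsCyclicInterval.not_chordsCross (hS : IsCyclicInterval S) {a b c d : ZMod n}
    (ha : a ∈ S) (hc : c ∈ S) (hb : b ∉ S) (hd : d ∉ S) : ¬ ChordsCross a c b d := by
  obtain ⟨t, K, hmem⟩ := hS.exists_forall_mem_iff_val_sub_le
  rw [hmem] at ha hb hc hd
  rw [ChordsCross, ← ZMod.sbtw_sub_right t, ← ZMod.sbtw_sub_right (b := d) t,
    ZMod.sbtw_iff_val_lt, ZMod.sbtw_iff_val_lt, xor_def]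
  omega

end CyclicInterval

lemma sym2Indep_mk_iff {V : Type*} {a b c d : V} :
    Sym2Indep s(a, b) s(c, d) ↔ a ≠ c ∧ a ≠ d ∧ b ≠ c ∧ b ≠ d := by
  simp [Sym2Indep, and_assoc]

lemma convexCross_iff_chordsCross {V : Type*} {n : ℕ} [NeZero n] (σ : V → ZMod n)
    (hσ : Function.Injective σ) {p q r s : V} :
    ConvexCross σ s(p, q) s(r, s) ↔
      Sym2Indep s(p, q) s(r, s) ∧ ChordsCross (σ p) (σ q) (σ r) (σ s) := by
  simp only [ConvexCross, inArc_iff_sbtw]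
  refine ⟨fun ⟨hind, a, b, c, d, he, hf, hx⟩ => ⟨hind, ?_⟩,
    fun ⟨hind, hx⟩ => ⟨hind, p, q, r, s, rfl, rfl, hx⟩⟩
  obtain ⟨hpr, hps, hqr, hqs⟩ := sym2Indep_mk_iff.1 hind
  have comm_left := chordsCross_comm_left (hσ.ne hpr).symm (hσ.ne hqr).symm (hσ.ne hps).symm
    (hσ.ne hqs).symm
  rw [Sym2.eq_iff] at he hf
  rcases he with ⟨rfl, rfl⟩ | ⟨rfl, rfl⟩ <;> rcases hf with ⟨rfl, rfl⟩ | ⟨rfl, rfl⟩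
  · exact hx
  · exact chordsCross_comm_right.1 hx
  · exact comm_left.1 hx
  · exact comm_left.1 (chordsCross_comm_right.1 hx)

lemma completeTripartite_adj {k : ℕ} {u v : Fin 3 × Fin k} :
    (completeTripartite k).Adj u v ↔ u.1 ≠ v.1 := by
  rw [completeTripartite, SimpleGraph.fromRel_adj, ne_comm (a := v.1), or_self,
    and_iff_right_of_imp]
  exact fun h huv => h (congrArg Prod.fst huv)

lemma Fin.eq_or_eq_of_four_cycle {a b c d : Fin 3} :
    a ≠ b → b ≠ c → c ≠ d → d ≠ a → a = c ∨ b = d := by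
  revert a b c d; decide

theorem fourCycle_one_crossing_of_tripartite_intervals_general (k : ℕ)
    (σ : Fin 3 × Fin k → ZMod (Fintype.card (Fin 3 × Fin k)))
    (hσ : Function.Injective σ)
    (hint : ∀ i : Fin 3, IsCyclicInterval (σ '' {v : Fin 3 × Fin k | v.1 = i}))
    (w x y z : Fin 3 × Fin k)
    (hwx : (completeTripartite k).Adj w x) (hxy : (completeTripartite k).Adj x y)
    (hyz : (completeTripartite k).Adj y z) (hzw : (completeTripartite k).Adj z w)
    (hwy : w ≠ y) (hxz : x ≠ z) :
    Xor' (ConvexCross σ s(w, x) s(y, z)) (ConvexCross σ s(x, y) s(z, w)) := by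
  have : Nonempty (Fin 3 × Fin k) := ⟨w⟩
  have : NeZero (Fintype.card (Fin 3 × Fin k)) := ⟨Fintype.card_ne_zero⟩
  rw [convexCross_iff_chordsCross σ hσ, convexCross_iff_chordsCross σ hσ,
    and_iff_right (sym2Indep_mk_iff.2 ⟨hwy, hzw.ne.symm, hxy.ne, hxz⟩),
    and_iff_right (sym2Indep_mk_iff.2 ⟨hxz, hwx.ne.symm, hyz.ne, hwy.symm⟩)]
  have hσwx := hσ.ne hwx.ne; have hσxy := hσ.ne hxy.ne; have hσyz := hσ.ne hyz.ne
  have hσzw := hσ.ne hzw.ne; have hσwy := hσ.ne hwy; have hσxz := hσ.ne hxz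
  have mem_class {v : Fin 3 × Fin k} {i : Fin 3} : σ v ∈ σ '' {u | u.1 = i} ↔ v.1 = i :=
    hσ.mem_set_image
  simp only [completeTripartite_adj] at hwx hxy hyz hzw
  show Xor _ _
  rcases Fin.eq_or_eq_of_four_cycle hwx hxy hyz hzw with hwy' | hxz'
  · rw [ZMod.xor_chordsCross_iff_not_chordsCross hσwx hσwy hσzw.symm hσxy hσxz hσyz]
    exact (hint w.1).not_chordsCross (mem_class.2 rfl) (mem_class.2 hwy'.symm)
      (mem_class.not.2 hwx.symm) (mem_class.not.2 hzw)
  · rw [xor_comm, ZMod.chordsCross_comm hσwy.symm hσxy.symm hσzw hσxz.symm,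
      ZMod.xor_chordsCross_iff_not_chordsCross hσxy hσxz hσwx.symm hσyz hσwy.symm hσzw]
    exact (hint x.1).not_chordsCross (mem_class.2 rfl) (mem_class.2 hxz'.symm)
      (mem_class.not.2 hxy.symm) (mem_class.not.2 hwx)

/-- In a convex drawing of `K_{k,k,k}` in which the three partition classes occupy cyclic
intervals, every 4-cycle contains exactly one crossing pair of independent edges. -/
theorem fourCycle_one_crossing_of_tripartite_intervals (k : ℕ) (hk : 1 ≤ k)
    (σ : Fin 3 × Fin k → ZMod (Fintype.card (Fin 3 × Fin k)))
    (hσ : Function.Injective σ)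
    (hint : ∀ i : Fin 3, IsCyclicInterval (σ '' {v : Fin 3 × Fin k | v.1 = i}))
    (w x y z : Fin 3 × Fin k)
    (hwx : (completeTripartite k).Adj w x) (hxy : (completeTripartite k).Adj x y)
    (hyz : (completeTripartite k).Adj y z) (hzw : (completeTripartite k).Adj z w)
    (hwy : w ≠ y) (hxz : x ≠ z) :
    Xor' (ConvexCross σ s(w, x) s(y, z)) (ConvexCross σ s(x, y) s(z, w)) :=
  fourCycle_one_crossing_of_tripartite_intervals_general k σ hσ hint w x y z hwx hxy hyz hzw hwy hxz
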